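/- arXiv:1401.1956 — 4 statements merged into one kernel-verified Lean document; each statement's English description precedes it below -/
import Mathlib

section
/- For any natural number k ≥ 1, any complex number t, and complex numbers a_1,...,a_k, b_1,...,b_k, we have P_k(t) · ∏_{i=1}^k (a_i - b_i) = ∑_{A ⊆ {1,...,k}} (-1)^{k-|A|} · (t·∏_{i∈A} a_i + (1-t)·∏_{i∈A} b_i) · ∏_{i∉A} (t·a_i + (1-t)·b_i), where P_k(t) = (-t)^k(1-t) + t(1-t)^k. -/
open Finset

lemma sck_aux (k : ℕ) (t : ℂ) (a b c : Fin k → ℂ) :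
    ∑ A : Finset (Fin k), (-1 : ℂ) ^ (k - A.card) * (∏ i ∈ A, c i) *
        ∏ i ∈ Aᶜ, (t * a i + (1 - t) * b i) =
      ∏ i, (c i - (t * a i + (1 - t) * b i)) := by
  have h := Finset.prod_add (fun i => c i)
      (fun i => -(t * a i + (1 - t) * b i)) (Finset.univ : Finset (Fin k))
  simp only [← sub_eq_add_neg] at h
  rw [h, Finset.powerset_univ]
  refine Finset.sum_congr rfl fun A _ => ?_
  rw [← Finset.compl_eq_univ_sdiff]
  rw [show (fun i => -(t * a i + (1 - t) * b i)) = fun i => (-1 : ℂ) * (t * a i + (1 - t) * b i) by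
      funext i; ring]
  rw [Finset.prod_mul_distrib, Finset.prod_const, Finset.card_compl, Fintype.card_fin]
  ring

/-- For `k ≥ 1`, `t : ℂ` and `a b : Fin k → ℂ`,
`P_k(t) · ∏ (a i - b i)` equals the alternating sum over subsets `A` of `{1,…,k}`. -/
theorem secant_cumulant_key_identity (k : ℕ) (hk : 1 ≤ k) (t : ℂ) (a b : Fin k → ℂ) :
    ((-t) ^ k * (1 - t) + t * (1 - t) ^ k) * ∏ i, (a i - b i) =
      ∑ A : Finset (Fin k),
        (-1 : ℂ) ^ (k - A.card) *
          (t * ∏ i ∈ A, a i + (1 - t) * ∏ i ∈ A, b i) *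
          ∏ i ∈ Aᶜ, (t * a i + (1 - t) * b i) := by
  have key : ∀ A : Finset (Fin k),
      (-1 : ℂ) ^ (k - A.card) * (t * ∏ i ∈ A, a i + (1 - t) * ∏ i ∈ A, b i) *
          ∏ i ∈ Aᶜ, (t * a i + (1 - t) * b i) =
        t * ((-1 : ℂ) ^ (k - A.card) * (∏ i ∈ A, a i) * ∏ i ∈ Aᶜ, (t * a i + (1 - t) * b i)) +
        (1 - t) * ((-1 : ℂ) ^ (k - A.card) * (∏ i ∈ A, b i) * ∏ i ∈ Aᶜ, (t * a i + (1 - t) * b i)) := by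
    intro A; ring
  simp only [key, Finset.sum_add_distrib, ← Finset.mul_sum, sck_aux]
  have h1 : ∏ i, (a i - (t * a i + (1 - t) * b i)) = (1 - t) ^ k * ∏ i, (a i - b i) := by
    rw [← Fin.prod_const, ← Finset.prod_mul_distrib]
    exact Finset.prod_congr rfl fun i _ => by ring
  have h2 : ∏ i, (b i - (t * a i + (1 - t) * b i)) = (-t) ^ k * ∏ i, (a i - b i) := by
    rw [← Fin.prod_const, ← Finset.prod_mul_distrib]
    exact Finset.prod_congr rfl fun i _ => by ring
  rw [h1, h2]; ring
end

section
/- If for fixed a_i, b_i the right-hand side R(t) := ∑_{A ⊆ {1,...,k}} (-1)^{k-|A|}(t∏_{i∈A}a_i + (1-t)∏_{i∈A}b_i)∏_{i∉A}(t a_i + (1-t)b_i) is viewed as a polynomial in the variables a_1,...,a_k, b_1,...,b_k over ℂ[t], then R vanishes whenever a_{i₀} = b_{i₀} for some index i₀; consequently R is divisible by ∏_{i=1}^k (a_i - b_i) in the polynomial ring. -/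
open Finset MvPolynomial


lemma key_sum {R : Type*} [CommRing R] {k : ℕ} (x y : Fin k → R) :
    ∑ A : Finset (Fin k), (-1 : R) ^ (k - A.card) * (∏ i ∈ A, x i) * ∏ i ∈ Aᶜ, y i
      = ∏ i : Fin k, (x i - y i) := by
  simp only [sub_eq_add_neg]
  rw [Finset.prod_add, Finset.powerset_univ]
  apply Finset.sum_congr rfl
  intro A _
  rw [← Finset.compl_eq_univ_sdiff]
  have : ∏ i ∈ Aᶜ, -y i = ∏ i ∈ Aᶜ, (-1) * y i :=
    Finset.prod_congr rfl fun i _ => (neg_one_mul _).symm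
  rw [this, Finset.prod_mul_distrib, Finset.prod_const, Finset.card_compl, Fintype.card_fin]
  ring

/-- The right-hand side `R` of the key identity, as a multivariate polynomial in the
variables `a_1,…,a_k,b_1,…,b_k` (encoded as `Sum.inl i` and `Sum.inr i`) over `ℂ[t]`. -/
noncomputable def secantRHS (k : ℕ) : MvPolynomial (Fin k ⊕ Fin k) (Polynomial ℂ) :=
  ∑ A : Finset (Fin k),
    (-1 : MvPolynomial (Fin k ⊕ Fin k) (Polynomial ℂ)) ^ (k - A.card) *
      (C Polynomial.X * ∏ i ∈ A, X (Sum.inl i) +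
        (1 - C Polynomial.X) * ∏ i ∈ A, X (Sum.inr i)) *
      ∏ i ∈ Aᶜ, (C Polynomial.X * X (Sum.inl i) + (1 - C Polynomial.X) * X (Sum.inr i))


lemma secantRHS_eq (k : ℕ) :
    secantRHS k =
      (C Polynomial.X * (1 - C Polynomial.X) ^ k +
        (1 - C Polynomial.X) * (-(C Polynomial.X : MvPolynomial (Fin k ⊕ Fin k) (Polynomial ℂ))) ^ k) *
      ∏ i : Fin k, (X (Sum.inl i) - X (Sum.inr i)) := by
  set t : MvPolynomial (Fin k ⊕ Fin k) (Polynomial ℂ) := C Polynomial.X with ht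
  have step : secantRHS k =
      t * ∑ A : Finset (Fin k), (-1 : MvPolynomial (Fin k ⊕ Fin k) (Polynomial ℂ)) ^ (k - A.card) *
            (∏ i ∈ A, X (Sum.inl i)) * ∏ i ∈ Aᶜ, (t * X (Sum.inl i) + (1 - t) * X (Sum.inr i)) +
      (1 - t) * ∑ A : Finset (Fin k), (-1 : MvPolynomial (Fin k ⊕ Fin k) (Polynomial ℂ)) ^ (k - A.card) *
            (∏ i ∈ A, X (Sum.inr i)) * ∏ i ∈ Aᶜ, (t * X (Sum.inl i) + (1 - t) * X (Sum.inr i)) := by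
    rw [secantRHS, Finset.mul_sum, Finset.mul_sum, ← Finset.sum_add_distrib]
    exact Finset.sum_congr rfl fun A _ => by ring
  rw [step, key_sum, key_sum]
  have h1 : ∏ i : Fin k, (X (Sum.inl i) - (t * X (Sum.inl i) + (1 - t) * X (Sum.inr i)))
      = (1 - t) ^ k * ∏ i : Fin k, (X (Sum.inl i) - X (Sum.inr i)) := by
    rw [show (1 - t) ^ k = ∏ _i : Fin k, (1 - t) by simp, ← Finset.prod_mul_distrib]
    exact Finset.prod_congr rfl fun i _ => by ring
  have h2 : ∏ i : Fin k, (X (Sum.inr i) - (t * X (Sum.inl i) + (1 - t) * X (Sum.inr i)))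
      = (-t) ^ k * ∏ i : Fin k, (X (Sum.inl i) - X (Sum.inr i)) := by
    rw [show (-t) ^ k = ∏ _i : Fin k, (-t) by simp, ← Finset.prod_mul_distrib]
    exact Finset.prod_congr rfl fun i _ => by ring
  rw [h1, h2]
  ring

/-- the polynomial `R` vanishes on any point with `a_{i₀} = b_{i₀}` for some
index `i₀`; consequently `∏ (a_i - b_i)` divides `R` in the polynomial ring. -/
theorem secantRHS_vanishes_and_divisible (k : ℕ) (hk : 1 ≤ k) :
    (∀ (v : Fin k ⊕ Fin k → Polynomial ℂ) (i₀ : Fin k),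
        v (Sum.inl i₀) = v (Sum.inr i₀) → eval v (secantRHS k) = 0) ∧
    (∏ i : Fin k, (X (Sum.inl i) - X (Sum.inr i))) ∣ secantRHS k := by
  refine ⟨?_, ?_⟩
  · intro v i₀ h
    rw [secantRHS_eq, eval_mul]
    have : eval v (∏ i : Fin k, (X (Sum.inl i) - X (Sum.inr i))) = 0 := by
      rw [map_prod]
      exact Finset.prod_eq_zero (Finset.mem_univ i₀) (by simp [h])
    rw [this, mul_zero]
  · exact ⟨_, (secantRHS_eq k).trans (mul_comm _ _)⟩
end

section
/- The multiplicity of the irreducible representation S_λ W, for λ a partition with exactly two rows λ₁ ≥ λ₂ and λ₁ + λ₂ = 3k, in S³(S^k W) (third symmetric power of the k-th symmetric power, dim W ≥ 2) equals (1/6)(c₁ + 3c₂ + 2c₃), where: c₁ = λ₂+1 if λ₂ ≤ k and λ₁-λ₂+1 if λ₂ ≥ k; c₂ = [λ₂ even] if λ₂ ≤ k, and if λ₂ ≥ k then c₂ = 0 for k odd, c₂ = 1 for k even and λ₂ even, c₂ = -1 for k even and λ₂ odd; c₃ = 1 if λ₂ ≡ 0 mod 3, -1 if λ₂ ≡ 1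 mod 3, 0 if λ₂ ≡ 2 mod 3. -/
open Finset

/-- The complete homogeneous symmetric polynomial of degree `m` in two variables. -/
noncomputable def hpoly (m : ℕ) (x y : ℂ) : ℂ := ∑ j ∈ Finset.range (m + 1), x ^ (m - j) * y ^ j

/-- The coefficient `c₁` from the decomposition `3 = 1+1+1`. -/
noncomputable def c1 (k l2 : ℕ) : ℂ := if l2 ≤ k then (l2 : ℂ) + 1 else (3 * k : ℂ) - 2 * l2 + 1

/-- The coefficient `c₂` from the decomposition `3 = 2+1`. -/
noncomputable def c2 (k l2 : ℕ) : ℂ :=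
  if l2 ≤ k then (if Even l2 then 1 else 0)
  else if Odd k then 0 else if Even l2 then 1 else -1

/-- The coefficient `c₃` from the decomposition `3 = 3`. -/
noncomputable def c3 (l2 : ℕ) : ℂ := if l2 % 3 = 0 then 1 else if l2 % 3 = 1 then -1 else 0

/-!
Each summand of `(x - y)(h_k³ + 3 h_k(x², y²) h_k + 2 h_k(x³, y³))` has the shape
`(x^e - y^e) · F` with `F` a palindromic binary form of degree `3k + 1 - e`: using
`(x - y) h_k = x^{k+1} - y^{k+1}`, the forms are `h_k²`, `h_k(x², y²)` and `h_k(x³, y³)`.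
Pairing the monomial `x^a y^b` of `x^e F` with `x^b y^a` of `y^e F` writes such a product as
`∑ g(l) (x^{n-l} y^l - x^l y^{n-l})` over `l ≤ n = 3k + 1`, with `g` the coefficient sequence
of `F`; folding by the antisymmetry `l ↦ n - l` leaves the coefficients `g(l) - g(n - l)`
for `l ≤ 3k/2`. For the three forms, `g(l)` is the number of ways to write `l = i + j` with
`i, j ≤ k`, resp. `[2 ∣ l, l ≤ 2k]`, resp. `[3 ∣ l]`, and the differences are `c₁`, `c₂`, `c₃`.
-/

section BinaryForm

variable {R : Type*} [CommRing R]

def binaryForm (d : ℕ) (f : ℕ → R) (x y : R) : R :=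
  ∑ l ∈ range (d + 1), f l * (x ^ (d - l) * y ^ l)

/-- `altMonomial (λ₁ + λ₂ + 1) λ₂ x y = (x - y) s_{(λ₁,λ₂)}(x, y)`. -/
def altMonomial (n l : ℕ) (x y : R) : R :=
  x ^ (n - l) * y ^ l - x ^ l * y ^ (n - l)

theorem altMonomial_sub_eq_neg (n l : ℕ) (hl : l ≤ n) (x y : R) :
    altMonomial n (n - l) x y = -altMonomial n l x y := by
  rw [altMonomial, altMonomial, Nat.sub_sub_self hl]
  ring

theorem sum_range_mul_altMonomial_eq_half (g : ℕ → R) (n : ℕ) (x y : R) :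
    ∑ l ∈ range (n + 1), g l * altMonomial n l x y =
      ∑ l ∈ range ((n + 1) / 2), (g l - g (n - l)) * altMonomial n l x y := by
  have upper (m : ℕ) (hm : n + 1 = (n + 1) / 2 + m) :
      ∑ i ∈ range m, g ((n + 1) / 2 + i) * altMonomial n ((n + 1) / 2 + i) x y =
        -∑ l ∈ range m, g (n - l) * altMonomial n l x y := by
    rw [← sum_range_reflect, ← sum_neg_distrib]
    refine sum_congr rfl fun l hl => ?_
    have hl := mem_range.mp hl
    rw [show (n + 1) / 2 + (m - 1 - l) = n - l by omega, altMonomial_sub_eq_neg n l (by omega)]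
    ring
  obtain ⟨m, rfl | rfl⟩ := Nat.even_or_odd' n
  · have hmid : altMonomial (2 * m) m x y = 0 := by
      rw [altMonomial, show 2 * m - m = m by omega, sub_self]
    rw [show (2 * m + 1) / 2 = m by omega] at upper ⊢
    rw [show 2 * m + 1 = m + (m + 1) by omega, sum_range_add, upper (m + 1) (by omega),
      sum_range_succ, show 2 * m - m = m by omega, hmid, mul_zero, add_zero, ← sub_eq_add_neg,
      ← sum_sub_distrib]
    simp only [sub_mul]
  · rw [show (2 * m + 1 + 1) / 2 = m + 1 by omega] at upper ⊢
    rw [show 2 * m + 1 + 1 = (m + 1) + (m + 1) by omega, sum_range_add, upper (m + 1) (by omega),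
      ← sub_eq_add_neg, ← sum_sub_distrib]
    simp only [sub_mul]

theorem sub_pow_mul_binaryForm {d : ℕ} {f : ℕ → R} (hf : ∀ l ≤ d, f (d - l) = f l) (e : ℕ)
    (x y : R) :
    (x ^ e - y ^ e) * binaryForm d f x y =
      ∑ l ∈ range ((d + e + 1) / 2),
        ((if l ≤ d then f l else 0) - if d + e - l ≤ d then f (d + e - l) else 0) *
          altMonomial (d + e) l x y := by
  have reflect : ∑ l ∈ range (d + 1), f l * (x ^ (d - l) * y ^ (l + e)) =
      ∑ l ∈ range (d + 1), f l * (x ^ l * y ^ (d + e - l)) := by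
    rw [← sum_range_reflect]
    refine sum_congr rfl fun l hl => ?_
    have hl : l ≤ d := Nat.lt_succ_iff.mp (mem_range.mp hl)
    rw [show d + 1 - 1 - l = d - l by omega, hf l hl, Nat.sub_sub_self hl,
      show d - l + e = d + e - l by omega]
  have expand : (x ^ e - y ^ e) * binaryForm d f x y =
      ∑ l ∈ range (d + 1), f l * altMonomial (d + e) l x y := by
    simp only [binaryForm, altMonomial, mul_sub, mul_sum, sum_sub_distrib, ← reflect]
    rw [← sum_sub_distrib]
    refine sum_congr rfl fun l hl => ?_
    rw [show d + e - l = d - l + e by have := mem_range.mp hl; omega]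
    ring
  have extend : ∑ l ∈ range (d + 1), f l * altMonomial (d + e) l x y =
      ∑ l ∈ range (d + e + 1), (if l ≤ d then f l else 0) * altMonomial (d + e) l x y := by
    simp only [ite_mul, zero_mul]
    rw [← sum_filter]
    congr 1
    ext l
    simp only [mem_filter, mem_range]
    omega
  rw [expand, extend]
  exact sum_range_mul_altMonomial_eq_half (fun l => if l ≤ d then f l else 0) (d + e) x y

end BinaryForm

theorem sub_mul_hpoly (m : ℕ) (x y : ℂ) :
    (x - y) * hpoly m x y = x ^ (m + 1) - y ^ (m + 1) := by
  rw [mul_comm, ← geom_sum₂_mul, hpoly, ← sum_range_reflect]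
  congr 1
  refine sum_congr rfl fun j hj => ?_
  have hj := mem_range.mp hj
  rw [show m + 1 - 1 - j = m - j by omega, Nat.sub_sub_self (by omega)]

theorem hpoly_pow_pow_eq_binaryForm (m : ℕ) {r : ℕ} (hr : 0 < r) (x y : ℂ) :
    hpoly m (x ^ r) (y ^ r) = binaryForm (r * m) (fun l => if r ∣ l then 1 else 0) x y := by
  have multiples : {l ∈ range (r * m + 1) | r ∣ l} =
      (range (m + 1)).map ⟨(r * ·), mul_right_injective₀ hr.ne'⟩ := by
    ext l
    simp only [mem_filter, mem_range, mem_map, Function.Embedding.coeFn_mk]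
    constructor
    · rintro ⟨hl, j, rfl⟩
      exact ⟨j, by nlinarith, rfl⟩
    · rintro ⟨j, hj, rfl⟩
      exact ⟨by nlinarith, dvd_mul_right r j⟩
  simp only [binaryForm, ite_mul, one_mul, zero_mul]
  rw [← sum_filter, multiples, sum_map, hpoly]
  refine sum_congr rfl fun j _ => ?_
  simp only [Function.Embedding.coeFn_mk, ← pow_mul, Nat.mul_sub]

theorem card_filter_add_eq (k l : ℕ) (hl : l ≤ 2 * k) :
    #{p ∈ range (k + 1) ×ˢ range (k + 1) | p.1 + p.2 = l} = min l (2 * k - l) + 1 := by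
  have fiber : {p ∈ range (k + 1) ×ˢ range (k + 1) | p.1 + p.2 = l} =
      (Icc (l - k) (min l k)).image fun j => (j, l - j) := by
    ext ⟨a, b⟩
    simp only [mem_filter, mem_product, mem_image, mem_Icc, mem_range, Prod.mk.injEq]
    constructor
    · rintro ⟨⟨ha, hb⟩, hab⟩
      exact ⟨a, ⟨by omega, by omega⟩, rfl, by omega⟩
    · rintro ⟨j, ⟨hj1, hj2⟩, rfl, rfl⟩
      exact ⟨⟨by omega, by omega⟩, by omega⟩
  rw [fiber, card_image_of_injective _ fun a b hab => congrArg Prod.fst hab, Nat.card_Icc]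
  omega

theorem hpoly_sq (k : ℕ) (x y : ℂ) :
    hpoly k x y ^ 2 = binaryForm (2 * k) (fun l => ((min l (2 * k - l) : ℕ) : ℂ) + 1) x y := by
  have sum_maps : ∀ p ∈ range (k + 1) ×ˢ range (k + 1), p.1 + p.2 ∈ range (2 * k + 1) := by
    intro p hp
    simp only [mem_product, mem_range] at hp ⊢
    omega
  rw [hpoly, sq, sum_mul_sum, ← sum_product', binaryForm, ← sum_fiberwise_of_maps_to sum_maps]
  refine sum_congr rfl fun l hl => ?_
  have hl := mem_range.mp hl
  have on_fiber : ∀ p ∈ {p ∈ range (k + 1) ×ˢ range (k + 1) | p.1 + p.2 = l},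
      x ^ (k - p.1) * y ^ p.1 * (x ^ (k - p.2) * y ^ p.2) = x ^ (2 * k - l) * y ^ l := by
    rintro ⟨a, b⟩ hp
    simp only [mem_filter, mem_product, mem_range] at hp
    rw [mul_mul_mul_comm, ← pow_add, ← pow_add, show k - a + (k - b) = 2 * k - l by omega, hp.2]
  rw [sum_congr rfl on_fiber, sum_const, card_filter_add_eq k l (by omega), nsmul_eq_mul]
  push_cast
  ring

theorem c1_eq {k l : ℕ} (hl : l ≤ 3 * k / 2) :
    ((if l ≤ 2 * k then ((min l (2 * k - l) : ℕ) : ℂ) + 1 else 0) -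
      if 3 * k + 1 - l ≤ 2 * k then
        ((min (3 * k + 1 - l) (2 * k - (3 * k + 1 - l)) : ℕ) : ℂ) + 1 else 0) = c1 k l := by
  unfold c1
  by_cases hlk : l ≤ k
  · rw [if_pos (by omega), if_neg (by omega), if_pos hlk, min_eq_left (by omega)]
    ring
  · rw [if_pos (by omega), if_pos (by omega), if_neg hlk, min_eq_right (by omega),
      min_eq_right (by omega), show 2 * k - (3 * k + 1 - l) = l - (k + 1) by omega,
      Nat.cast_sub (by omega : l ≤ 2 * k), Nat.cast_sub (by omega : k + 1 ≤ l)]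
    push_cast
    ring

theorem c2_eq {k l : ℕ} (hl : l ≤ 3 * k / 2) :
    ((if l ≤ 2 * k then (if 2 ∣ l then 1 else 0 : ℂ) else 0) -
      if 3 * k + 1 - l ≤ 2 * k then (if 2 ∣ 3 * k + 1 - l then 1 else 0 : ℂ) else 0) =
      c2 k l := by
  unfold c2
  simp only [Nat.even_iff, Nat.odd_iff]
  split_ifs <;> first | omega | norm_num

theorem c3_eq {k l : ℕ} (hl : l ≤ 3 * k / 2) :
    ((if l ≤ 3 * k then (if 3 ∣ l then 1 else 0 : ℂ) else 0) -
      if 3 * k + 1 - l ≤ 3 * k then (if 3 ∣ 3 * k + 1 - l then 1 else 0 : ℂ) else 0) =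
      c3 l := by
  unfold c3
  split_ifs <;> first | omega | norm_num

theorem sub_mul_hpoly_pow_three (k : ℕ) (x y : ℂ) :
    (x - y) * hpoly k x y ^ 3 =
      ∑ l ∈ range (3 * k / 2 + 1), c1 k l * altMonomial (3 * k + 1) l x y := by
  have palindromic : ∀ l ≤ 2 * k,
      ((min (2 * k - l) (2 * k - (2 * k - l)) : ℕ) : ℂ) + 1 =
        ((min l (2 * k - l) : ℕ) : ℂ) + 1 :=
    fun l hl => by rw [Nat.sub_sub_self hl, min_comm]
  rw [show (x - y) * hpoly k x y ^ 3 = ((x - y) * hpoly k x y) * hpoly k x y ^ 2 by ring,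
    sub_mul_hpoly, hpoly_sq, sub_pow_mul_binaryForm palindromic,
    show 2 * k + (k + 1) = 3 * k + 1 by ring, show (3 * k + 1 + 1) / 2 = 3 * k / 2 + 1 by omega]
  exact sum_congr rfl fun l hl => by rw [c1_eq (by have := mem_range.mp hl; omega)]

theorem sub_mul_hpoly_pow_pow_two_mul_hpoly (k : ℕ) (x y : ℂ) :
    (x - y) * (hpoly k (x ^ 2) (y ^ 2) * hpoly k x y) =
      ∑ l ∈ range (3 * k / 2 + 1), c2 k l * altMonomial (3 * k + 1) l x y := by
  have palindromic : ∀ l ≤ 2 * k,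
      (if 2 ∣ 2 * k - l then 1 else 0 : ℂ) = if 2 ∣ l then 1 else 0 :=
    fun l hl => if_congr (Nat.dvd_sub_iff_right hl (dvd_mul_right 2 k)) rfl rfl
  rw [mul_left_comm, sub_mul_hpoly, mul_comm, hpoly_pow_pow_eq_binaryForm k two_pos,
    sub_pow_mul_binaryForm palindromic, show 2 * k + (k + 1) = 3 * k + 1 by ring,
    show (3 * k + 1 + 1) / 2 = 3 * k / 2 + 1 by omega]
  exact sum_congr rfl fun l hl => by rw [c2_eq (by have := mem_range.mp hl; omega)]

theorem sub_mul_hpoly_pow_pow_three (k : ℕ) (x y : ℂ) :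
    (x - y) * hpoly k (x ^ 3) (y ^ 3) =
      ∑ l ∈ range (3 * k / 2 + 1), c3 l * altMonomial (3 * k + 1) l x y := by
  have palindromic : ∀ l ≤ 3 * k,
      (if 3 ∣ 3 * k - l then 1 else 0 : ℂ) = if 3 ∣ l then 1 else 0 :=
    fun l hl => if_congr (Nat.dvd_sub_iff_right hl (dvd_mul_right 3 k)) rfl rfl
  have expansion :=
    sub_pow_mul_binaryForm (f := fun l => if 3 ∣ l then 1 else 0) palindromic 1 x y
  rw [pow_one, pow_one, show (3 * k + 1 + 1) / 2 = 3 * k / 2 + 1 by omega] at expansion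
  rw [hpoly_pow_pow_eq_binaryForm k three_pos, expansion]
  exact sum_congr rfl fun l hl => by rw [c3_eq (by have := mem_range.mp hl; omega)]

/-- The multiplicities, as a character identity in two variables: the character of `S³(S^k W)`
is `(h_k³ + 3 h_k(x², y²) h_k + 2 h_k(x³, y³)) / 6`, and multiplying by `x - y` turns the Schur
polynomial `s_{(λ₁,λ₂)}` into `x^{λ₁+1} y^{λ₂} - x^{λ₂} y^{λ₁+1}`. -/
theorem sym3_symk_multiplicity (k : ℕ) (x y : ℂ) :
    (x - y) * ((hpoly k x y) ^ 3 + 3 * hpoly k (x ^ 2) (y ^ 2) * hpoly k x y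
        + 2 * hpoly k (x ^ 3) (y ^ 3)) =
      ∑ l2 ∈ Finset.range (3 * k / 2 + 1),
        (c1 k l2 + 3 * c2 k l2 + 2 * c3 l2) *
          (x ^ (3 * k - l2 + 1) * y ^ l2 - x ^ l2 * y ^ (3 * k - l2 + 1)) := by
  rw [mul_add, mul_add, mul_assoc 3, mul_left_comm _ 3, mul_left_comm _ 2,
    sub_mul_hpoly_pow_three, sub_mul_hpoly_pow_pow_two_mul_hpoly, sub_mul_hpoly_pow_pow_three,
    mul_sum, mul_sum, ← sum_add_distrib, ← sum_add_distrib]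
  refine sum_congr rfl fun l hl => ?_
  rw [altMonomial, show 3 * k + 1 - l = 3 * k - l + 1 by have := mem_range.mp hl; omega]
  ring
end

section
/- Let k be even. The polynomial P = ∑_{σ ∈ S_{2k}} sgn(σ) · x_{σ(1)...σ(k)} · x_{σ(k+1)...σ(2k)} · x_{1...k} in the Plücker variables x_{a₁...a_k} (skew-symmetric in their indices) does not vanish at the point Q = e₁∧...∧e_k + e_{k+1}∧...∧e_{2k}; specifically P(Q) is a nonzero multiple of the evaluation of the single monomial x_{1...k}² x_{k+1...2k}, and in particular P(Q) ≠ 0. -/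
open Finset

/-- The evaluation at `Q = e₁∧…∧e_k + e_{k+1}∧…∧e_{2k} ∈ Λ^k ℂ^{2k}` of the alternating
Plücker variable `x_{a₁…a_k}`: it is the dual pairing
`⟨e*_{a₁}∧…∧e*_{a_k}, Q⟩`, i.e. the sum of the two determinants of 0/1 matrices recording
whether the index tuple `a` matches the first or the second block of basis vectors
(this is alternating in the indices `a₁,…,a_k` and picks out, with sign, the variables
`x_{1…k}` and `x_{k+1…2k}`). -/
noncomputable def coordQ (k : ℕ) (a : Fin k → Fin (2 * k)) : ℂ :=
  (Matrix.of fun i j : Fin k => if (a j : ℕ) = (i : ℕ) then (1 : ℂ) else 0).det +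
    (Matrix.of fun i j : Fin k => if (a j : ℕ) = k + (i : ℕ) then (1 : ℂ) else 0).det

/-!
Index the two halves of `Fin (2k)` by `ι ⊕ ι`, `ι = Fin k`. The coordinate `x_f(Q)` is the sum
of the determinants of the 0/1 matrices recording where `f` meets the first and the second half,
so it vanishes unless `f` lands entirely in one half. Hence the summand at `τ` vanishes unless `τ`
preserves or swaps the halves. If `τ` preserves them, its permutation matrix is block diagonal and
the two block determinants multiply to `sign τ`, so the summand is `sign τ ^ 2 = 1`. Composing
with the swap of the halves, of sign `(-1)^k = 1`, reduces the other case to this one. So every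
summand is `0` or `1`, the identity contributes `1`, and `P(Q)` is a positive integer.
-/

open Equiv Matrix Sum

namespace Equiv.Perm

theorem sign_sumComm_self (ι : Type*) [Fintype ι] [DecidableEq ι] :
    sign (sumComm ι ι) = (-1) ^ Fintype.card ι := by
  have h : sumComm ι ι =
      (boolProdEquivSum ι).permCongr (prodCongrLeft fun _ => swap false true) := by
    ext (x | x) <;> simp [permCongr_apply]
  rw [h, sign_permCongr, sign_prodCongrLeft]
  simp

theorem apply_inr_ne_inl {ι : Type*} [Finite ι] {τ : Perm (ι ⊕ ι)}
    (h : ∀ j, ∃ i, τ (inl j) = inl i) (j i : ι) : τ (inr j) ≠ inl i := by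
  choose g hg using h
  have hg_inj : Function.Injective g := fun a b hab =>
    inl_injective (τ.injective (by rw [hg, hg, hab]))
  obtain ⟨j', rfl⟩ := Finite.injective_iff_surjective.mp hg_inj i
  rw [← hg]
  exact fun hc => inl_ne_inr (τ.injective hc).symm

end Equiv.Perm

theorem Matrix.det_of_perm_apply_eq {ι R : Type*} [Fintype ι] [DecidableEq ι] [CommRing R]
    (τ : Perm ι) :
    (of fun x y => if τ y = x then (1 : R) else 0).det = Perm.sign τ := by
  have h : (of fun x y => if τ y = x then (1 : R) else 0) = (τ.permMatrix R)ᵀ := by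
    ext x y
    simp [PEquiv.toMatrix_apply]
  rw [h, det_transpose, det_permutation]

namespace PluckerQ

variable {ι R : Type*} [Fintype ι] [DecidableEq ι] [CommRing R]

variable (R) in
/-- `x_f(Q)` for `Q = e_{inl} + e_{inr}`, where `e_{inl}` (resp. `e_{inr}`) is the wedge of the
basis vectors indexed by the first (resp. second) copy of `ι`. -/
def evalQ (f : ι → ι ⊕ ι) : R :=
  (of fun i j => if f j = inl i then (1 : R) else 0).det +
    (of fun i j => if f j = inr i then (1 : R) else 0).det

theorem evalQ_eq_zero {f : ι → ι ⊕ ι} {j j' : ι} (hj : ∀ i, f j ≠ inl i)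
    (hj' : ∀ i, f j' ≠ inr i) : evalQ R f = 0 := by
  rw [evalQ, det_eq_zero_of_column_eq_zero j fun i => if_neg (hj i),
    det_eq_zero_of_column_eq_zero j' fun i => if_neg (hj' i), add_zero]

theorem evalQ_swap_comp (f : ι → ι ⊕ ι) : evalQ R (Sum.swap ∘ f) = evalQ R f := by
  rw [evalQ, evalQ, add_comm]
  congr 2 <;> ext i j <;>
    exact if_congr (by rw [Function.comp_apply]; cases f j <;> simp) rfl rfl

theorem evalQ_inl [Nonempty ι] : evalQ R (inl : ι → ι ⊕ ι) = 1 := by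
  have h₁ : (of fun i j : ι => if (inl j : ι ⊕ ι) = inl i then (1 : R) else 0) = 1 := by
    ext i j
    simp [one_apply, eq_comm]
  have h₂ : (of fun i j : ι => if (inl j : ι ⊕ ι) = inr i then (1 : R) else 0) = 0 := by
    ext i j
    simp
  rw [evalQ, h₁, h₂, det_one, det_zero, add_zero]

variable (R) in
/-- The summand of `P(Q)` at `τ`, without the factor `x_{1…k}(Q) = 1`. -/
def cubicTerm (τ : Perm (ι ⊕ ι)) : R :=
  ((Perm.sign τ : ℤ) : R) * evalQ R (τ ∘ inl) * evalQ R (τ ∘ inr)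

theorem cubicTerm_trans_sumComm (h : Even (Fintype.card ι)) (τ : Perm (ι ⊕ ι)) :
    cubicTerm R (τ.trans (sumComm ι ι)) = cubicTerm R τ := by
  have hinl : τ.trans (sumComm ι ι) ∘ inl = Sum.swap ∘ (τ ∘ inl) := rfl
  have hinr : τ.trans (sumComm ι ι) ∘ inr = Sum.swap ∘ (τ ∘ inr) := rfl
  rw [cubicTerm, cubicTerm, Perm.sign_trans, Perm.sign_sumComm_self, h.neg_one_pow, one_mul,
    hinl, hinr, evalQ_swap_comp, evalQ_swap_comp]

theorem cubicTerm_of_forall_inl [Nonempty ι] {τ : Perm (ι ⊕ ι)}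
    (hτ : ∀ j, ∃ i, τ (inl j) = inl i) : cubicTerm R τ = 1 := by
  set M : Matrix (ι ⊕ ι) (ι ⊕ ι) R := of fun x y => if τ y = x then 1 else 0
  have hinl : evalQ R (τ ∘ inl) = M.toBlocks₁₁.det + M.toBlocks₂₁.det := rfl
  have hinr : evalQ R (τ ∘ inr) = M.toBlocks₁₂.det + M.toBlocks₂₂.det := rfl
  have h₂₁ : M.toBlocks₂₁ = 0 := by
    ext i j
    obtain ⟨a, ha⟩ := hτ j
    simp [M, toBlocks₂₁, ha]
  have h₁₂ : M.toBlocks₁₂ = 0 := by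
    ext i j
    simp [M, toBlocks₁₂, Perm.apply_inr_ne_inl hτ j i]
  have hdet : M.toBlocks₁₁.det * M.toBlocks₂₂.det = Perm.sign τ := by
    rw [← det_fromBlocks_zero₂₁ _ M.toBlocks₁₂, ← h₂₁, fromBlocks_toBlocks,
      det_of_perm_apply_eq]
  rw [cubicTerm, hinl, hinr, h₂₁, h₁₂, det_zero, add_zero, zero_add, mul_assoc, hdet,
    ← Int.cast_mul, ← Units.val_mul, Int.units_mul_self, Units.val_one, Int.cast_one]

theorem cubicTerm_eq_zero_or_one [Nonempty ι] (h : Even (Fintype.card ι)) (τ : Perm (ι ⊕ ι)) :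
    cubicTerm R τ = 0 ∨ cubicTerm R τ = 1 := by
  by_cases hl : ∀ j, ∃ i, τ (inl j) = inl i
  · exact Or.inr (cubicTerm_of_forall_inl hl)
  by_cases hr : ∀ j, ∃ i, τ (inl j) = inr i
  · rw [← cubicTerm_trans_sumComm h]
    exact Or.inr (cubicTerm_of_forall_inl fun j => (hr j).imp fun i hi => by simp [hi])
  push Not at hl hr
  obtain ⟨j, hj⟩ := hl
  obtain ⟨j', hj'⟩ := hr
  rw [cubicTerm, evalQ_eq_zero hj hj', mul_zero, zero_mul]
  exact Or.inl rfl

theorem sum_cubicTerm_ne_zero [CharZero R] [Nonempty ι] (h : Even (Fintype.card ι)) :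
    ∑ τ : Perm (ι ⊕ ι), cubicTerm R τ ≠ 0 := by
  classical
  have hcount : ∑ τ : Perm (ι ⊕ ι), cubicTerm R τ =
      #{τ : Perm (ι ⊕ ι) | cubicTerm R τ = 1} := by
    rw [← sum_boole]
    refine sum_congr rfl fun τ _ => ?_
    rcases cubicTerm_eq_zero_or_one (R := R) h τ with hτ | hτ <;> simp [hτ]
  rw [hcount, Nat.cast_ne_zero]
  exact card_ne_zero_of_mem
    (mem_filter.mpr ⟨mem_univ 1, cubicTerm_of_forall_inl (R := R) fun j => ⟨j, rfl⟩⟩)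

end PluckerQ

open PluckerQ

def finTwoMulEquivSum (k : ℕ) : Fin (2 * k) ≃ Fin k ⊕ Fin k :=
  (finCongr (two_mul k)).trans finSumFinEquiv.symm

theorem finTwoMulEquivSum_eq_inl_iff {k : ℕ} {x : Fin (2 * k)} {i : Fin k} :
    finTwoMulEquivSum k x = inl i ↔ (x : ℕ) = i := by
  simp [finTwoMulEquivSum, ← Equiv.eq_symm_apply, Fin.ext_iff]

theorem finTwoMulEquivSum_eq_inr_iff {k : ℕ} {x : Fin (2 * k)} {i : Fin k} :
    finTwoMulEquivSum k x = inr i ↔ (x : ℕ) = k + i := by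
  simp [finTwoMulEquivSum, ← Equiv.eq_symm_apply, Fin.ext_iff, add_comm]

theorem castLE_eq_finTwoMulEquivSum_symm_inl {k : ℕ} (h : k ≤ 2 * k) (i : Fin k) :
    Fin.castLE h i = (finTwoMulEquivSum k).symm (inl i) :=
  (finTwoMulEquivSum k).eq_symm_apply.mpr (finTwoMulEquivSum_eq_inl_iff.mpr rfl)

theorem mk_add_eq_finTwoMulEquivSum_symm_inr {k : ℕ} (i : Fin k) (h : k + i < 2 * k) :
    (⟨k + i, h⟩ : Fin (2 * k)) = (finTwoMulEquivSum k).symm (inr i) :=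
  (finTwoMulEquivSum k).eq_symm_apply.mpr (finTwoMulEquivSum_eq_inr_iff.mpr rfl)

theorem coordQ_eq_evalQ {k : ℕ} (a : Fin k → Fin (2 * k)) :
    coordQ k a = evalQ ℂ (finTwoMulEquivSum k ∘ a) := by
  simp only [coordQ, evalQ, Function.comp_apply, finTwoMulEquivSum_eq_inl_iff,
    finTwoMulEquivSum_eq_inr_iff]

/-- for `k` even, the cubic
`P = ∑_{σ ∈ S_{2k}} sgn(σ) x_{σ(1)…σ(k)} x_{σ(k+1)…σ(2k)} x_{1…k}` does not vanish at
`Q = e₁∧…∧e_k + e_{k+1}∧…∧e_{2k}`. -/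
theorem highest_weight_cubic_nonzero_even (k : ℕ) (hk : 0 < k) (hke : Even k) :
    (∑ σ : Equiv.Perm (Fin (2 * k)),
        ((Equiv.Perm.sign σ : ℤ) : ℂ) *
          coordQ k (fun i => σ (Fin.castLE (by omega) i)) *
          coordQ k (fun i => σ ⟨k + (i : ℕ), by have := i.isLt; omega⟩) *
          coordQ k (fun i => Fin.castLE (by omega) i)) ≠ 0 := by
  have : Nonempty (Fin k) := ⟨⟨0, hk⟩⟩
  convert sum_cubicTerm_ne_zero (R := ℂ) (by rwa [Fintype.card_fin]) using 1
  rw [← ((finTwoMulEquivSum k).permCongr).sum_comp]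
  refine sum_congr rfl fun σ _ => ?_
  simp only [coordQ_eq_evalQ, cubicTerm, castLE_eq_finTwoMulEquivSum_symm_inl,
    mk_add_eq_finTwoMulEquivSum_symm_inr, Function.comp_def, Equiv.apply_symm_apply, evalQ_inl,
    mul_one, Perm.sign_permCongr, permCongr_apply]
end
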